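/- Let P = {T_1,…,T_k} be a profile, U_0 = {r(T_1),…,r(T_k)} the set of roots. If the intersection graph G_P(U_0) is disconnected with components inducing species sets A_1,…,A_r (which partition L(P)), then P is compatible if and only if for every j the restricted profile P|A_j is compatible. -/
import Mathlib


attribute [local instance] Classical.propDecidable

/-- A rooted phylogenetic tree on a finite species set, represented by its
(laminar) family of clusters, which contains the full leaf set and all
singletons.  By the classical correspondence, such families are exactly the
cluster sets of rooted phylogenetic trees (internal nodes with ≥ 2 children). -/
structure PhyloTree (S : Type) [DecidableEq S] where
  leaves : Finset S
  clusters : Finset (Finset S)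
  leaves_nonempty : leaves.Nonempty
  leaves_mem : leaves ∈ clusters
  singleton_mem : ∀ x ∈ leaves, ({x} : Finset S) ∈ clusters
  subset_leaves : ∀ C ∈ clusters, C ⊆ leaves
  nonempty_mem : ∀ C ∈ clusters, C.Nonempty
  laminar : ∀ C ∈ clusters, ∀ D ∈ clusters, C ∩ D = ∅ ∨ C ⊆ D ∨ D ⊆ C

variable {S : Type} [DecidableEq S]

/-- Restriction of a family of clusters to a subset `A` of species:
`{C ∩ A : C ∈ H, C ∩ A ≠ ∅}`. -/
def restrictFam (H : Finset (Finset S)) (A : Finset S) : Finset (Finset S) :=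
  (H.image (fun C => C ∩ A)).filter (fun C => C.Nonempty)

/-- The cluster set of the restriction `T|A`. -/
def restrictClusters (T : PhyloTree S) (A : Finset S) : Finset (Finset S) :=
  restrictFam T.clusters A

/-- `T` displays `T'`: every cluster of `T'` is a cluster of `T|L(T')`. -/
def Displays (T T' : PhyloTree S) : Prop :=
  T'.clusters ⊆ restrictClusters T T'.leaves

/-- `T` induces the rooted triple `ab|c`: the restriction of `T` to `{a,b,c}`
is binary with `a,b` separated from `c`, i.e. `{a,b}` is a cluster of it. -/
def Triple (T : PhyloTree S) (a b c : S) : Prop :=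
  a ∈ T.leaves ∧ b ∈ T.leaves ∧ c ∈ T.leaves ∧ a ≠ b ∧ a ≠ c ∧ b ≠ c ∧
    ({a, b} : Finset S) ∈ restrictClusters T ({a, b, c} : Finset S)

/-- A node of the profile `P` is a pair `(i, C)` with `C` a cluster (= node) of `T i`. -/
def NodeOf {k : ℕ} (P : Fin k → PhyloTree S) (u : Fin k × Finset S) : Prop :=
  u.2 ∈ (P u.1).clusters

/-- `L(U)`: the union of the clusters of the nodes in `U`. -/
def LofU {k : ℕ} (U : Finset (Fin k × Finset S)) : Finset S :=
  U.sup (fun u => u.2)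

/-- `U(i) = U ∩ V(T_i)`, as the set of clusters of the nodes of `U` in tree `i`. -/
def Ui {k : ℕ} (U : Finset (Fin k × Finset S)) (i : Fin k) : Finset (Finset S) :=
  (U.filter (fun u => u.1 = i)).image (fun u => u.2)

/-- Node (cluster) `C` is a child of node (cluster) `D` in `T`. -/
def IsChild (T : PhyloTree S) (C D : Finset S) : Prop :=
  C ∈ T.clusters ∧ D ∈ T.clusters ∧ C ⊂ D ∧
    ∀ E ∈ T.clusters, C ⊂ E → E ⊂ D → False

/-- The set of children (clusters) of the node with cluster `C` in `T`. -/
noncomputable def ChildrenOf (T : PhyloTree S) (C : Finset S) : Finset (Finset S) :=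
  T.clusters.filter (fun D => IsChild T D C)

/-- `U` is a valid (nonempty) subset of `V(P)`. -/
def Valid {k : ℕ} (P : Fin k → PhyloTree S) (U : Finset (Fin k × Finset S)) : Prop :=
  U.Nonempty ∧
  (∀ u ∈ U, NodeOf P u) ∧
  (∀ i : Fin k, 2 ≤ (Ui U i).card →
    ∃ D ∈ (P i).clusters, ∀ C ∈ Ui U i, IsChild (P i) C D) ∧
  (∀ i : Fin k, (Ui U i).sup id = (P i).leaves ∩ LofU U)

/-- `U` is compatible: some tree on `L(U)` displays `T_i|L(U)` for every `i`. -/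
def CompatU {k : ℕ} (P : Fin k → PhyloTree S) (U : Finset (Fin k × Finset S)) : Prop :=
  ∃ T : PhyloTree S, T.leaves = LofU U ∧
    ∀ i : Fin k, restrictClusters (P i) (LofU U) ⊆
      restrictClusters T ((P i).leaves ∩ LofU U)

/-- The profile `P` is compatible: some tree on `L(P)` displays every `T_i`. -/
def CompatP {k : ℕ} (P : Fin k → PhyloTree S) : Prop :=
  ∃ T : PhyloTree S, T.leaves = Finset.univ.sup (fun i => (P i).leaves) ∧
    ∀ i : Fin k, Displays T (P i)

/-- Edge `(a,b)` of the triplet graph of the restricted profile `P|A`: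
some restricted tree `T_i|A` induces a rooted triple `ab|c`. -/
def TGEdge {k : ℕ} (P : Fin k → PhyloTree S) (A : Finset S) (a b : S) : Prop :=
  a ≠ b ∧ ∃ i : Fin k, ∃ c : S, c ∈ (P i).leaves ∩ A ∧ c ≠ a ∧ c ≠ b ∧
    ∃ C ∈ restrictClusters (P i) A, a ∈ C ∧ b ∈ C ∧ c ∉ C

/-- Adjacency (within `U`) of the intersection graph `G_P(U)`. -/
def GPadj {k : ℕ} (U : Finset (Fin k × Finset S))
    (u v : Fin k × Finset S) : Prop :=
  u ∈ U ∧ v ∈ U ∧ (u.2 ∩ v.2).Nonempty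

lemma mem_restrictFam {H : Finset (Finset S)} {A C : Finset S} :
    C ∈ restrictFam H A ↔ (∃ D ∈ H, D ∩ A = C) ∧ C.Nonempty := by
  simp [restrictFam, Finset.mem_filter, Finset.mem_image]

lemma restrictFam_mono {H H' : Finset (Finset S)} (h : H ⊆ H') (A : Finset S) :
    restrictFam H A ⊆ restrictFam H' A := by
  intro C hC
  rw [mem_restrictFam] at hC ⊢
  obtain ⟨⟨D, hD, hDA⟩, hne⟩ := hC
  exact ⟨⟨D, h hD, hDA⟩, hne⟩

/-- Restriction of a phylogenetic tree to a nonempty subset of its leaves. -/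
noncomputable def restrictTree (T : PhyloTree S) (A : Finset S)
    (hA : A ⊆ T.leaves) (hne : A.Nonempty) : PhyloTree S where
  leaves := A
  clusters := restrictFam T.clusters A
  leaves_nonempty := hne
  leaves_mem := by
    rw [mem_restrictFam]
    exact ⟨⟨T.leaves, T.leaves_mem, Finset.inter_eq_right.mpr hA⟩, hne⟩
  singleton_mem := by
    intro x hx
    rw [mem_restrictFam]
    refine ⟨⟨{x}, T.singleton_mem x (hA hx), ?_⟩, Finset.singleton_nonempty x⟩
    exact Finset.inter_eq_left.mpr (Finset.singleton_subset_iff.mpr hx)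
  subset_leaves := by
    intro C hC
    rw [mem_restrictFam] at hC
    obtain ⟨⟨D, _, rfl⟩, _⟩ := hC
    exact Finset.inter_subset_right
  nonempty_mem := by
    intro C hC
    exact (mem_restrictFam.mp hC).2
  laminar := by
    intro C hC D hD
    rw [mem_restrictFam] at hC hD
    obtain ⟨⟨C', hC', rfl⟩, _⟩ := hC
    obtain ⟨⟨D', hD', rfl⟩, _⟩ := hD
    rcases T.laminar C' hC' D' hD' with h | h | h
    · left
      rw [← Finset.subset_empty, ← h]
      intro x hx
      simp only [Finset.mem_inter] at hx ⊢
      exact ⟨hx.1.1, hx.2.1⟩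
    · right; left; exact Finset.inter_subset_inter h (le_refl A)
    · right; right; exact Finset.inter_subset_inter h (le_refl A)

/-- Let `U₀` be the set of roots of the trees of a
(nonempty) profile `P`, and suppose the components of `G_P(U₀)` are described
by a surjection `c : Fin k → Fin r` (two trees get the same color iff their
roots are connected via overlapping species sets).  Let `A j` be the union of
the species sets of the trees of color `j`; the `A j` partition `L(P)`.
Then `P` is compatible iff for every `j` the restricted profile `P|A j`
(equivalently, the subprofile of trees of color `j`) is compatible. -/
theorem stmt15 {k r : ℕ} (hk : 0 < k) (P : Fin k → PhyloTree S)
    (c : Fin k → Fin r) (hsurj : Function.Surjective c)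
    (hc : ∀ i j : Fin k, c i = c j ↔
      Relation.ReflTransGen
        (fun i' j' : Fin k => ((P i').leaves ∩ (P j').leaves).Nonempty) i j) :
    CompatP P ↔
      ∀ j : Fin r, ∃ T : PhyloTree S,
        T.leaves = Finset.univ.sup (fun i : Fin k =>
          if c i = j then (P i).leaves else ∅) ∧
        ∀ i : Fin k, c i = j → Displays T (P i) := by
  set L : Finset S := Finset.univ.sup (fun i => (P i).leaves) with hL
  set A : Fin r → Finset S := fun j => Finset.univ.sup (fun i : Fin k =>
    if c i = j then (P i).leaves else ∅) with hA
  have hmemA : ∀ j x, x ∈ A j ↔ ∃ i : Fin k, c i = j ∧ x ∈ (P i).leaves := by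
    intro j x
    simp only [hA, Finset.mem_sup, Finset.mem_univ, true_and]
    constructor
    · rintro ⟨i, hi⟩
      by_cases h : c i = j
      · exact ⟨i, h, by simpa [h] using hi⟩
      · simp [h] at hi
    · rintro ⟨i, h1, h2⟩; exact ⟨i, by simp [h1, h2]⟩
  have hAL : ∀ j, A j ⊆ L := by
    intro j x hx
    obtain ⟨i, _, hx⟩ := (hmemA j x).mp hx
    exact Finset.mem_sup.mpr ⟨i, Finset.mem_univ i, hx⟩
  have hLA : ∀ i : Fin k, (P i).leaves ⊆ A (c i) := by
    intro i x hx
    exact (hmemA (c i) x).mpr ⟨i, rfl, hx⟩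
  have hAne : ∀ j, (A j).Nonempty := by
    intro j
    obtain ⟨i, rfl⟩ := hsurj j
    obtain ⟨x, hx⟩ := (P i).leaves_nonempty
    exact ⟨x, hLA i hx⟩
  have hdisj : ∀ j1 j2, j1 ≠ j2 → ∀ x, x ∈ A j1 → x ∈ A j2 → False := by
    intro j1 j2 hne x h1 h2
    obtain ⟨i1, hi1, hx1⟩ := (hmemA j1 x).mp h1
    obtain ⟨i2, hi2, hx2⟩ := (hmemA j2 x).mp h2
    have : c i1 = c i2 := (hc i1 i2).mpr (Relation.ReflTransGen.single ⟨x, Finset.mem_inter.mpr ⟨hx1, hx2⟩⟩)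
    exact hne (hi1 ▸ hi2 ▸ this)
  constructor
  · rintro ⟨T, hTl, hTd⟩ j
    have hAsub : A j ⊆ T.leaves := hTl ▸ hAL j
    refine ⟨restrictTree T (A j) hAsub (hAne j), rfl, ?_⟩
    intro i hij C hC
    have := hTd i hC
    rw [restrictClusters, mem_restrictFam] at this
    obtain ⟨⟨D, hD, hDC⟩, hCne⟩ := this
    rw [restrictClusters, restrictTree, mem_restrictFam]
    refine ⟨⟨D ∩ A j, ?_, ?_⟩, hCne⟩
    · rw [mem_restrictFam]
      refine ⟨⟨D, hD, rfl⟩, ?_⟩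
      obtain ⟨x, hx⟩ := hCne
      rw [← hDC] at hx
      exact ⟨x, Finset.mem_inter.mpr ⟨(Finset.mem_inter.mp hx).1,
        hij ▸ hLA i (Finset.mem_inter.mp hx).2⟩⟩
    · have h1 : (P i).leaves ⊆ A j := by rw [← hij]; exact hLA i
      rw [Finset.inter_assoc, Finset.inter_eq_right.mpr h1, hDC]
  · intro h
    choose T hT1 hT2 using h
    have hTlA : ∀ j, (T j).leaves = A j := hT1
    set Cl : Finset (Finset S) :=
      insert L (Finset.univ.biUnion fun j : Fin r => (T j).clusters) with hCl
    have hmemCl : ∀ C, C ∈ Cl ↔ C = L ∨ ∃ j, C ∈ (T j).clusters := by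
      intro C; simp [hCl]
    have hsubL : ∀ C ∈ Cl, C ⊆ L := by
      intro C hC
      rcases (hmemCl C).mp hC with rfl | ⟨j, hj⟩
      · exact le_refl L
      · exact ((T j).subset_leaves C hj).trans ((hTlA j) ▸ hAL j)
    obtain ⟨i0⟩ : Nonempty (Fin k) := ⟨⟨0, hk⟩⟩
    have hLne : L.Nonempty := by
      obtain ⟨x, hx⟩ := (P i0).leaves_nonempty
      exact ⟨x, Finset.mem_sup.mpr ⟨i0, Finset.mem_univ i0, hx⟩⟩
    refine ⟨⟨L, Cl, hLne, Finset.mem_insert_self _ _, ?_, hsubL, ?_, ?_⟩, rfl, ?_⟩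
    · -- singletons
      intro x hx
      obtain ⟨i, _, hxi⟩ := Finset.mem_sup.mp hx
      have : x ∈ (T (c i)).leaves := (hTlA (c i)) ▸ hLA i hxi
      exact (hmemCl _).mpr (Or.inr ⟨c i, (T (c i)).singleton_mem x this⟩)
    · -- nonempty
      intro C hC
      rcases (hmemCl C).mp hC with rfl | ⟨j, hj⟩
      · exact hLne
      · exact (T j).nonempty_mem C hj
    · -- laminar
      intro C hC D hD
      rcases (hmemCl C).mp hC with rfl | ⟨j1, hj1⟩
      · right; right; exact hsubL D hD
      rcases (hmemCl D).mp hD with rfl | ⟨j2, hj2⟩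
      · right; left; exact hsubL C hC
      by_cases hj : j1 = j2
      · subst hj; exact (T j1).laminar C hj1 D hj2
      · left
        rw [Finset.eq_empty_iff_forall_notMem]
        intro x hx
        have hx1 : x ∈ A j1 := (hTlA j1) ▸ (T j1).subset_leaves C hj1 (Finset.mem_inter.mp hx).1
        have hx2 : x ∈ A j2 := (hTlA j2) ▸ (T j2).subset_leaves D hj2 (Finset.mem_inter.mp hx).2
        exact hdisj j1 j2 hj x hx1 hx2
    · -- displays
      intro i
      intro C hC
      have := hT2 (c i) i rfl hC
      exact restrictFam_mono (fun D hD => (hmemCl D).mpr (Or.inr ⟨c i, hD⟩)) _ this
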